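/- arXiv:0712.2490 — 3 statements merged into one kernel-verified Lean document; each statement's English description precedes it below -/
import Mathlib

section
/- Let X be a finite type (the hidden variable space), p : X → ℝ≥0 a probability distribution, and for each x ∈ X and each setting pair (α,β) ∈ {A,a} × {B,b}, let Δ₁(α,x), Δ₂(β,x), E₁(α,x), E₂(β,x) be reals with 0 < E₁(α,x), 0 < E₂(β,x), |Δ₁(α,x)| ≤ E₁(α,x), |Δ₂(β,x)| ≤ E₂(β,x). Define E(α,β) = Σₓ p(x) E₁(α,x) E₂(β,x) and B = Σ_{(α,β)} ε(α,β) Σₓ p(x) Δ₁(α,x) Δ₂(β,x) / E(α,β), where ε(α,β) = 1 except ε(a,b) = −1. Then |B| ≤ 4 − 2 Σₓ p(x) · min over (α,β) of E₁(α,x)E₂(β,x)/E(α,β). -/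
/-!
Normalising each outcome by its efficiency, `s α = Δ₁ α x / E₁ α x` and `t β = Δ₂ β x / E₂ β x`
lie in `[-1, 1]`, and for each hidden variable `x` the contribution to `B` is a CHSH combination
`∑ ε(α,β) r(α,β) s α t β` with nonnegative weights `r(α,β) = E₁ α x E₂ β x / E α β`.
Splitting off the common part `m = min r` of the weights, the part `m • (s ⊗ t)` obeys the
ordinary CHSH bound `2m`, while the remainder is bounded termwise by `∑ (r - m)`.
Averaging over `p`, each weight averages to `1`, which produces the `4`.
-/

open Finset

/-- The paper's `∑ ε(α,β) f(α,β)`. -/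
def chsh (f : Bool → Bool → ℝ) : ℝ :=
  f true true + f true false + f false true - f false false

def chshMin (f : Bool → Bool → ℝ) : ℝ :=
  min (min (f true true) (f true false)) (min (f false true) (f false false))

lemma chshMin_le (f : Bool → Bool → ℝ) (α β : Bool) : chshMin f ≤ f α β := by
  unfold chshMin
  cases α <;> cases β <;> simp

lemma chshMin_nonneg {f : Bool → Bool → ℝ} (hf : ∀ α β, 0 ≤ f α β) : 0 ≤ chshMin f :=
  le_min (le_min (hf _ _) (hf _ _)) (le_min (hf _ _) (hf _ _))

lemma abs_chsh_le_sum_abs (f : Bool → Bool → ℝ) : |chsh f| ≤ ∑ α, ∑ β, |f α β| := by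
  simp only [chsh, Fintype.sum_bool]
  linarith [abs_sub (f true true + f true false + f false true) (f false false),
    abs_add_three (f true true) (f true false) (f false true)]

lemma abs_chsh_mul_le_two {s t : Bool → ℝ} (hs : ∀ α, |s α| ≤ 1) (ht : ∀ β, |t β| ≤ 1) :
    |chsh (fun α β => s α * t β)| ≤ 2 :=
  calc |chsh (fun α β => s α * t β)|
      = |s true * (t true + t false) + s false * (t true - t false)| := by
        unfold chsh; ring_nf
    _ ≤ |t true + t false| + |t true - t false| := by
        refine (abs_add_le _ _).trans (add_le_add ?_ ?_) <;>
          rw [abs_mul] <;> exact mul_le_of_le_one_left (abs_nonneg _) (hs _)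
    _ ≤ 2 := by
        have := abs_le.mp (ht true)
        have := abs_le.mp (ht false)
        rcases abs_cases (t true + t false) with ⟨h, -⟩ | ⟨h, -⟩ <;>
          rcases abs_cases (t true - t false) with ⟨h', -⟩ | ⟨h', -⟩ <;> linarith

lemma abs_chsh_weighted_le {r : Bool → Bool → ℝ} {s t : Bool → ℝ} {m : ℝ}
    (hm : 0 ≤ m) (hmr : ∀ α β, m ≤ r α β) (hs : ∀ α, |s α| ≤ 1) (ht : ∀ β, |t β| ≤ 1) :
    |chsh (fun α β => r α β * (s α * t β))| ≤ ∑ α, ∑ β, r α β - 2 * m := by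
  have hsplit : chsh (fun α β => r α β * (s α * t β))
      = m * chsh (fun α β => s α * t β) + chsh (fun α β => (r α β - m) * (s α * t β)) := by
    unfold chsh; ring
  have hcommon : |m * chsh (fun α β => s α * t β)| ≤ 2 * m := by
    rw [abs_mul, abs_of_nonneg hm, mul_comm]
    exact mul_le_mul_of_nonneg_right (abs_chsh_mul_le_two hs ht) hm
  have hrest : |chsh (fun α β => (r α β - m) * (s α * t β))| ≤ ∑ α, ∑ β, (r α β - m) := by
    refine (abs_chsh_le_sum_abs _).trans (sum_le_sum fun α _ => sum_le_sum fun β _ => ?_)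
    rw [abs_mul, abs_of_nonneg (sub_nonneg.mpr (hmr α β)), abs_mul]
    exact mul_le_of_le_one_right (sub_nonneg.mpr (hmr α β))
      (mul_le_one₀ (hs α) (abs_nonneg _) (ht β))
  have hcount : ∑ α, ∑ β, (r α β - m) = ∑ α, ∑ β, r α β - 4 * m := by
    simp only [Fintype.sum_bool]; ring
  rw [hsplit]
  linarith [abs_add_le (m * chsh (fun α β => s α * t β))
    (chsh (fun α β => (r α β - m) * (s α * t β)))]

lemma abs_chsh_div_le {u a v b : Bool → ℝ} {e : Bool → Bool → ℝ}
    (ha : ∀ α, 0 < a α) (hb : ∀ β, 0 < b β) (he : ∀ α β, 0 < e α β)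
    (hu : ∀ α, |u α| ≤ a α) (hv : ∀ β, |v β| ≤ b β) :
    |chsh (fun α β => u α * v β / e α β)|
      ≤ ∑ α, ∑ β, a α * b β / e α β - 2 * chshMin (fun α β => a α * b β / e α β) := by
  have hnormalised : ∀ {c w : ℝ}, 0 < c → |w| ≤ c → |w / c| ≤ 1 := fun hc hw => by
    rwa [abs_div, abs_of_pos hc, div_le_one hc]
  have hrescale : (fun α β => u α * v β / e α β)
      = fun α β => a α * b β / e α β * (u α / a α * (v β / b β)) := by
    ext α β
    field_simp [(ha α).ne', (hb β).ne']
  rw [hrescale]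
  exact abs_chsh_weighted_le (chshMin_nonneg fun α β => (div_pos (mul_pos (ha α) (hb β)) (he α β)).le)
    (chshMin_le _) (fun α => hnormalised (ha α) (hu α)) (fun β => hnormalised (hb β) (hv β))

lemma sum_mul_pos_of_sum_eq_one {X : Type*} [Fintype X] {p c : X → ℝ} (hp : ∀ x, 0 ≤ p x)
    (hp1 : ∑ x, p x = 1) (hc : ∀ x, 0 < c x) : 0 < ∑ x, p x * c x := by
  obtain ⟨x₀, -, hx₀⟩ := exists_ne_zero_of_sum_ne_zero (hp1.trans_ne one_ne_zero)
  exact sum_pos' (fun x _ => mul_nonneg (hp x) (hc x).le)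
    ⟨x₀, mem_univ _, mul_pos ((hp x₀).lt_of_ne' hx₀) (hc x₀)⟩

/-- Settings are encoded by `Bool`: `true = A` (resp. `B`), `false = a` (resp. `b`). -/
theorem chsh_postselected_bound (X : Type) [Fintype X]
    (p : X → ℝ) (hp : ∀ x, 0 ≤ p x) (hp1 : ∑ x, p x = 1)
    (Δ₁ E₁ Δ₂ E₂ : Bool → X → ℝ)
    (hE₁ : ∀ α x, 0 < E₁ α x) (hE₂ : ∀ β x, 0 < E₂ β x)
    (hΔ₁ : ∀ α x, |Δ₁ α x| ≤ E₁ α x) (hΔ₂ : ∀ β x, |Δ₂ β x| ≤ E₂ β x)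
    (E : Bool → Bool → ℝ)
    (hE : ∀ α β, E α β = ∑ x, p x * E₁ α x * E₂ β x)
    (B : ℝ)
    (hB : B = (∑ x, p x * Δ₁ true x * Δ₂ true x) / E true true
            + (∑ x, p x * Δ₁ true x * Δ₂ false x) / E true false
            + (∑ x, p x * Δ₁ false x * Δ₂ true x) / E false true
            - (∑ x, p x * Δ₁ false x * Δ₂ false x) / E false false) :
    |B| ≤ 4 - 2 * ∑ x, p x *
      min (min (E₁ true x * E₂ true x / E true true)
               (E₁ true x * E₂ false x / E true false))
          (min (E₁ false x * E₂ true x / E false true)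
               (E₁ false x * E₂ false x / E false false)) := by
  have hEpos : ∀ α β, 0 < E α β := fun α β => by
    simpa only [hE, mul_assoc] using
      sum_mul_pos_of_sum_eq_one hp hp1 fun x => mul_pos (hE₁ α x) (hE₂ β x)
  have hweight : ∀ α β, ∑ x, p x * (E₁ α x * E₂ β x / E α β) = 1 := fun α β => by
    simp_rw [← mul_div_assoc, ← mul_assoc, ← sum_div, ← hE]
    exact div_self (hEpos α β).ne'
  have hBsum : B = ∑ x, p x * chsh (fun α β => Δ₁ α x * Δ₂ β x / E α β) := by
    rw [hB]
    simp only [chsh, mul_add, mul_sub, sum_add_distrib, sum_sub_distrib, sum_div, mul_div_assoc,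
      mul_assoc]
  calc |B| ≤ ∑ x, p x * |chsh (fun α β => Δ₁ α x * Δ₂ β x / E α β)| := by
        rw [hBsum]
        refine (abs_sum_le_sum_abs _ _).trans_eq (sum_congr rfl fun x _ => ?_)
        rw [abs_mul, abs_of_nonneg (hp x)]
    _ ≤ ∑ x, p x * (∑ α, ∑ β, E₁ α x * E₂ β x / E α β
          - 2 * chshMin (fun α β => E₁ α x * E₂ β x / E α β)) :=
        sum_le_sum fun x _ => mul_le_mul_of_nonneg_left
          (abs_chsh_div_le (hE₁ · x) (hE₂ · x) hEpos (hΔ₁ · x) (hΔ₂ · x)) (hp x)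
    _ = 4 - 2 * ∑ x, p x * chshMin (fun α β => E₁ α x * E₂ β x / E α β) := by
        simp only [mul_sub, mul_add, Fintype.sum_bool, sum_sub_distrib, sum_add_distrib, hweight,
          mul_left_comm (p _) 2, ← mul_sum]
        norm_num
end

section
/- Let E₁ : S₁ × X → ℝ>0 and E₂ : S₂ × X → ℝ>0 be positive functions on finite types, with |S₁|, |S₂| ≥ 1, and suppose the ratio E₁(α,x)E₂(β,x)/E(α,β) is independent of (α,β), where E(α,β) = Σₓ p(x)E₁(α,x)E₂(β,x) for a fixed everywhere-positive probability distribution p on X. Then there exist functions F₁ : S₁ → ℝ>0, F₂ : S₂ → ℝ>0, G₁ : X → ℝ>0, G₂ : X → ℝ>0 such that E₁(α,x) = F₁(α)G₁(x) and E₂(β,x) = F₂(β)G₂(x) for all α, β, x. -/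
/-! If `E₁ α x E₂ β x / E(α, β)` does not depend on `(α, β)`, comparing the pair `(α, β₀)` with a
reference pair `(α₀, β₀)` and cancelling `E₂ β₀ x` gives `E₁ α x = (E(α, β₀) / E(α₀, β₀)) E₁ α₀ x`,
and symmetrically for `E₂`. The normalisations `E(α, β)` are positive because `p` is a positive
probability distribution, so `X` is nonempty. -/

open Finset

theorem eq_div_mul_of_mul_div_eq {K : Type*} [Field K] {a a' b N N' : K}
    (hb : b ≠ 0) (hN : N ≠ 0) (hN' : N' ≠ 0) (h : a * b / N = a' * b / N') :
    a = N / N' * a' := by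
  rw [div_eq_div_iff hN hN'] at h
  rw [div_mul_eq_mul_div, eq_div_iff hN']
  exact mul_right_cancel₀ hb (by linear_combination h)

/-- Key step of Theorem 2: if the ratio E₁(α,x)E₂(β,x)/E(α,β) is independent
of the settings (α,β), then the efficiencies factorize as a product of a
function of the setting and a function of the hidden variable. -/
theorem efficiency_factorizes (S₁ S₂ X : Type)
    [Fintype S₁] [Fintype S₂] [Fintype X]
    [Nonempty S₁] [Nonempty S₂]
    (E₁ : S₁ → X → ℝ) (E₂ : S₂ → X → ℝ)
    (hE₁ : ∀ α x, 0 < E₁ α x) (hE₂ : ∀ β x, 0 < E₂ β x)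
    (p : X → ℝ) (hp : ∀ x, 0 < p x) (hp1 : ∑ x, p x = 1)
    (hind : ∀ (x : X) (α α' : S₁) (β β' : S₂),
      E₁ α x * E₂ β x / (∑ y, p y * E₁ α y * E₂ β y)
        = E₁ α' x * E₂ β' x / (∑ y, p y * E₁ α' y * E₂ β' y)) :
    ∃ (F₁ : S₁ → ℝ) (F₂ : S₂ → ℝ) (G₁ G₂ : X → ℝ),
      (∀ α, 0 < F₁ α) ∧ (∀ β, 0 < F₂ β) ∧
      (∀ x, 0 < G₁ x) ∧ (∀ x, 0 < G₂ x) ∧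
      (∀ α x, E₁ α x = F₁ α * G₁ x) ∧
      (∀ β x, E₂ β x = F₂ β * G₂ x) := by
  obtain ⟨α₀⟩ := ‹Nonempty S₁›
  obtain ⟨β₀⟩ := ‹Nonempty S₂›
  have hX : (univ : Finset X).Nonempty := nonempty_of_sum_ne_zero (hp1 ▸ one_ne_zero)
  set E : S₁ → S₂ → ℝ := fun α β => ∑ y, p y * E₁ α y * E₂ β y
  have hE : ∀ α β, 0 < E α β := fun α β =>
    sum_pos (fun y _ => mul_pos (mul_pos (hp y) (hE₁ α y)) (hE₂ β y)) hX
  refine ⟨fun α => E α β₀ / E α₀ β₀, fun β => E α₀ β / E α₀ β₀, E₁ α₀, E₂ β₀,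
    fun α => div_pos (hE α β₀) (hE α₀ β₀), fun β => div_pos (hE α₀ β) (hE α₀ β₀),
    hE₁ α₀, hE₂ β₀, fun α x => ?_, fun β x => ?_⟩
  · exact eq_div_mul_of_mul_div_eq (hE₂ β₀ x).ne' (hE α β₀).ne' (hE α₀ β₀).ne'
      (hind x α α₀ β₀ β₀)
  · refine eq_div_mul_of_mul_div_eq (hE₁ α₀ x).ne' (hE α₀ β).ne' (hE α₀ β₀).ne' ?_
    simpa only [mul_comm (E₁ α₀ x)] using hind x α₀ α₀ β β₀
end

section
/- Let M and M' be positive semidefinite Hermitian matrices on a finite-dimensional complex inner product space of dimension at least 2, with Tr(M') ≠ 0. Suppose that for every pair of orthonormal vectors φ₀, φ₁ we have ⟨φ₀|M|φ₀⟩⟨φ₁|M'|φ₁⟩ = ⟨φ₀|M'|φ₀⟩⟨φ₁|M|φ₁⟩. Then there exists a scalar κ ≥ 0 with M = κ M'. -/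
/-!
Let `τ = Tr M`, `τ' = Tr M'`. In any orthonormal basis `(eᵢ)`, summing the product condition
over `j` gives `τ' ⟨eᵢ|M|eᵢ⟩ = τ ⟨eᵢ|M'|eᵢ⟩`, so the Hermitian matrix `τ' M - τ M'` has zero
diagonal in every orthonormal basis. In its own eigenbasis this says that all its eigenvalues
vanish, hence `τ' M = τ M'`, and `κ = τ / τ'` works since both traces are nonnegative reals.
-/

open Matrix
open scoped ComplexOrder

theorem OrthonormalBasis.star_dotProduct {𝕜 ι κ : Type*} [RCLike 𝕜] [Fintype ι] [Fintype κ]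
    [DecidableEq κ] (b : OrthonormalBasis κ 𝕜 (EuclideanSpace 𝕜 ι)) (i j : κ) :
    star ⇑(b i) ⬝ᵥ ⇑(b j) = if i = j then 1 else 0 := by
  rw [dotProduct_comm, ← EuclideanSpace.inner_eq_star_dotProduct]
  exact orthonormal_iff_ite.mp b.orthonormal i j

theorem Finset.sum_mul_eq_sum_mul_of_mul_eq_mul {ι R : Type*} [Fintype ι] [CommSemiring R]
    {m m' : ι → R} (h : ∀ i j, i ≠ j → m i * m' j = m' i * m j) (i : ι) :
    (∑ j, m' j) * m i = (∑ j, m j) * m' i := by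
  rw [Finset.sum_mul, Finset.sum_mul]
  refine Finset.sum_congr rfl fun j _ => ?_
  rcases eq_or_ne i j with rfl | hij
  · exact mul_comm _ _
  · rw [mul_comm (m' j), h i j hij, mul_comm]

namespace Matrix

variable {𝕜 ι κ : Type*} [RCLike 𝕜] [Fintype ι] [Fintype κ]

theorem IsHermitian.isSelfAdjoint_trace {A : Matrix ι ι 𝕜} (hA : A.IsHermitian) :
    IsSelfAdjoint A.trace := by
  rw [IsSelfAdjoint, ← trace_conjTranspose, hA.eq]

theorem trace_eq_sum_star_dotProduct_mulVec [DecidableEq ι] (A : Matrix ι ι 𝕜)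
    (b : OrthonormalBasis κ 𝕜 (EuclideanSpace 𝕜 ι)) :
    A.trace = ∑ i, star ⇑(b i) ⬝ᵥ A *ᵥ ⇑(b i) := calc
  A.trace = LinearMap.trace 𝕜 _ (toLpLin 2 2 A) := by
    rw [LinearMap.trace_eq_matrix_trace _ (PiLp.basisFun 2 𝕜 ι), toLpLin_eq_toLin,
      LinearMap.toMatrix_toLin]
  _ = ∑ i, star ⇑(b i) ⬝ᵥ A *ᵥ ⇑(b i) := by
    simp [LinearMap.trace_eq_sum_inner _ b, EuclideanSpace.inner_eq_star_dotProduct,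
      dotProduct_comm]

def ProductCondition (M M' : Matrix ι ι 𝕜) : Prop :=
  ∀ φ₀ φ₁ : ι → 𝕜, star φ₀ ⬝ᵥ φ₀ = 1 → star φ₁ ⬝ᵥ φ₁ = 1 → star φ₀ ⬝ᵥ φ₁ = 0 →
    (star φ₀ ⬝ᵥ M *ᵥ φ₀) * (star φ₁ ⬝ᵥ M' *ᵥ φ₁) = (star φ₀ ⬝ᵥ M' *ᵥ φ₀) * (star φ₁ ⬝ᵥ M *ᵥ φ₁)

namespace ProductCondition

variable [DecidableEq ι] {M M' : Matrix ι ι 𝕜}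

theorem trace_mul_eq_trace_mul (h : ProductCondition M M')
    (b : OrthonormalBasis κ 𝕜 (EuclideanSpace 𝕜 ι)) (i : κ) :
    M'.trace * (star ⇑(b i) ⬝ᵥ M *ᵥ ⇑(b i)) = M.trace * (star ⇑(b i) ⬝ᵥ M' *ᵥ ⇑(b i)) := by
  classical
  rw [trace_eq_sum_star_dotProduct_mulVec M' b, trace_eq_sum_star_dotProduct_mulVec M b]
  refine Finset.sum_mul_eq_sum_mul_of_mul_eq_mul (fun i j hij => h _ _ ?_ ?_ ?_) i <;>
    simp [b.star_dotProduct, hij]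

theorem trace_smul_eq_trace_smul (h : ProductCondition M M') (hM : M.IsHermitian)
    (hM' : M'.IsHermitian) : M'.trace • M = M.trace • M' := by
  have hN : (M'.trace • M - M.trace • M').IsHermitian :=
    (hM.smul hM'.isSelfAdjoint_trace).sub (hM'.smul hM.isSelfAdjoint_trace)
  refine sub_eq_zero.mp <| hN.eigenvalues_eq_zero_iff.mp <| funext fun i => ?_
  rw [hN.eigenvalues_eq, sub_mulVec, smul_mulVec, smul_mulVec, dotProduct_sub, dotProduct_smul,
    dotProduct_smul, smul_eq_mul, smul_eq_mul, h.trace_mul_eq_trace_mul, sub_self, map_zero,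
    Pi.zero_apply]

end ProductCondition

end Matrix

theorem proportional_of_product_condition_general (n : ℕ)
    (M M' : Matrix (Fin n) (Fin n) ℂ)
    (hM : M.PosSemidef) (hM' : M'.PosSemidef) (htr : M'.trace ≠ 0)
    (h : ∀ φ₀ φ₁ : Fin n → ℂ,
      star φ₀ ⬝ᵥ φ₀ = 1 → star φ₁ ⬝ᵥ φ₁ = 1 → star φ₀ ⬝ᵥ φ₁ = 0 →
      (star φ₀ ⬝ᵥ M.mulVec φ₀) * (star φ₁ ⬝ᵥ M'.mulVec φ₁)
        = (star φ₀ ⬝ᵥ M'.mulVec φ₀) * (star φ₁ ⬝ᵥ M.mulVec φ₁)) :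
    ∃ κ : ℝ, 0 ≤ κ ∧ M = (κ : ℂ) • M' := by
  have hsmul : M'.trace • M = M.trace • M' :=
    ProductCondition.trace_smul_eq_trace_smul h hM.isHermitian hM'.isHermitian
  obtain ⟨t, ht, htM⟩ := RCLike.nonneg_iff_exists_ofReal.mp hM.trace_nonneg
  obtain ⟨t', ht', htM'⟩ := RCLike.nonneg_iff_exists_ofReal.mp hM'.trace_nonneg
  refine ⟨t / t', div_nonneg ht ht', ?_⟩
  rw [← htM, ← htM'] at hsmul
  rw [← htM'] at htr
  rw [Complex.ofReal_div, div_eq_inv_mul, mul_smul]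
  exact (eq_inv_smul_iff₀ htr).mpr hsmul

/-- Proportionality lemma from the proof of Theorem 4: if two positive
semidefinite matrices (dimension ≥ 2, Tr M' ≠ 0) satisfy
⟨φ₀|M|φ₀⟩⟨φ₁|M'|φ₁⟩ = ⟨φ₀|M'|φ₀⟩⟨φ₁|M|φ₁⟩ for every orthonormal pair
φ₀, φ₁, then M = κ M' for some κ ≥ 0. -/
theorem proportional_of_product_condition (n : ℕ) (hn : 2 ≤ n)
    (M M' : Matrix (Fin n) (Fin n) ℂ)
    (hM : M.PosSemidef) (hM' : M'.PosSemidef) (htr : M'.trace ≠ 0)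
    (h : ∀ φ₀ φ₁ : Fin n → ℂ,
      star φ₀ ⬝ᵥ φ₀ = 1 → star φ₁ ⬝ᵥ φ₁ = 1 → star φ₀ ⬝ᵥ φ₁ = 0 →
      (star φ₀ ⬝ᵥ M.mulVec φ₀) * (star φ₁ ⬝ᵥ M'.mulVec φ₁)
        = (star φ₀ ⬝ᵥ M'.mulVec φ₀) * (star φ₁ ⬝ᵥ M.mulVec φ₁)) :
    ∃ κ : ℝ, 0 ≤ κ ∧ M = (κ : ℂ) • M' :=
  proportional_of_product_condition_general n M M' hM hM' htr h
end
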